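/- arXiv:2508.09872 — 6 statements merged into one kernel-verified Lean document; each statement's English description precedes it below -/
import Mathlib

section
/- The only non-semisymmetric words of length 7 over the alphabet {1,2}, up to cyclic permutation and transposition of the associated periodic orbit, are 2112122 and 1112122; equivalently, every periodic orbit over {1,2} of minimal period at most 5 is semisymmetric, and the non-semisymmetric orbits of minimal period 7 are exactly those of 2112122 and 1112122 and their transposes. -/
/-- The periodic bi-infinite sequence with period the word `w` (`w` at positions `0..len-1`). -/
def periodize (w : List ℕ) : ℤ → ℕ := fun n => w.getD (n % (w.length : ℤ)).toNat 0

/-- A word is a palindrome if it equals its transpose (reversal). -/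
def IsPalindrome (w : List ℕ) : Prop := w.reverse = w

/-- A word is semisymmetric if it is a palindrome or a concatenation of two palindromes. -/
def Semisymmetric (w : List ℕ) : Prop :=
  IsPalindrome w ∨ ∃ p q : List ℕ, w = p ++ q ∧ IsPalindrome p ∧ IsPalindrome q

/-- `w` is the minimal period of the periodic sequence `periodize w`:
no proper prefix generates the same periodic sequence. -/
def MinimalPeriodWord (w : List ℕ) : Prop :=
  w ≠ [] ∧ ∀ n : ℕ, 0 < n → n < w.length → periodize (w.take n) ≠ periodize w

/-!
Both claims are finite: there are only finitely many words of each length over `{1,2}`, and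
semisymmetry is a bounded search over the split points of a word, so the claims are checked by
enumerating all binary words of length at most 5 and of length 7. For the rotation classes,
`∃ k, w = l.rotate k` is exactly `l ~r w`, which is decidable as well.
-/

instance : DecidablePred IsPalindrome := fun w => inferInstanceAs (Decidable (w.reverse = w))

-- A palindrome `w` is the split `[] ++ w`, so one bounded search covers both cases.
theorem semisymmetric_iff_exists_palindrome_split (w : List ℕ) :
    Semisymmetric w ↔
      ∃ n < w.length + 1, IsPalindrome (w.take n) ∧ IsPalindrome (w.drop n) := by
  constructor
  · rintro (hw | ⟨p, q, rfl, hp, hq⟩)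
    · exact ⟨0, by omega, rfl, by simpa using hw⟩
    · exact ⟨p.length, by simp, by simpa using hp, by simpa using hq⟩
  · rintro ⟨n, -, hp, hq⟩
    exact Or.inr ⟨w.take n, w.drop n, (List.take_append_drop n w).symm, hp, hq⟩

instance : DecidablePred Semisymmetric := fun w =>
  decidable_of_iff _ (semisymmetric_iff_exists_palindrome_split w).symm

def binaryWords : ℕ → List (List ℕ)
  | 0 => [[]]
  | n + 1 => (binaryWords n).flatMap fun t => [1 :: t, 2 :: t]

theorem mem_binaryWords_length {w : List ℕ} (hw : ∀ x ∈ w, x = 1 ∨ x = 2) :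
    w ∈ binaryWords w.length := by
  induction w with
  | nil => simp [binaryWords]
  | cons a t ih =>
    simp only [List.length_cons, binaryWords, List.mem_flatMap]
    refine ⟨t, ih fun x hx => hw x (List.mem_cons_of_mem _ hx), ?_⟩
    rcases hw a List.mem_cons_self with rfl | rfl <;> simp

set_option maxRecDepth 100000 in
theorem semisymmetric_of_mem_binaryWords_of_le_five :
    ∀ n ≤ 5, ∀ w ∈ binaryWords n, Semisymmetric w := by
  decide

set_option maxRecDepth 100000 in
theorem not_semisymmetric_iff_isRotated_of_mem_binaryWords_seven :
    ∀ w ∈ binaryWords 7, ¬ Semisymmetric w ↔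
      [2,1,1,2,1,2,2] ~r w ∨ [2,1,1,2,1,2,2].reverse ~r w ∨
      [1,1,1,2,1,2,2] ~r w ∨ [1,1,1,2,1,2,2].reverse ~r w := by
  decide

/-- Every periodic orbit over the alphabet {1,2} of minimal period at most 5 is
semisymmetric, and the non-semisymmetric orbits of minimal period 7 are exactly those
of `2112122` and `1112122` and their transposes (up to cyclic rotation). -/
theorem length_seven_nonsemisymmetric :
    (∀ w : List ℕ, (∀ x ∈ w, x = 1 ∨ x = 2) → MinimalPeriodWord w →
      w.length ≤ 5 → Semisymmetric w) ∧
    (∀ w : List ℕ, (∀ x ∈ w, x = 1 ∨ x = 2) → MinimalPeriodWord w →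
      w.length = 7 →
      (¬ Semisymmetric w ↔ ∃ k : ℕ,
        w = List.rotate [2,1,1,2,1,2,2] k ∨ w = List.rotate ([2,1,1,2,1,2,2].reverse) k ∨
        w = List.rotate [1,1,1,2,1,2,2] k ∨ w = List.rotate ([1,1,1,2,1,2,2].reverse) k)) := by
  constructor
  · intro w hw _ hlen
    exact semisymmetric_of_mem_binaryWords_of_le_five _ hlen w (mem_binaryWords_length hw)
  · intro w hw _ hlen
    have hw7 : w ∈ binaryWords 7 := hlen ▸ mem_binaryWords_length hw
    rw [not_semisymmetric_iff_isRotated_of_mem_binaryWords_seven w hw7]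
    simp only [List.IsRotated, ← exists_or, eq_comm]
end

section
/- The Markov value of the periodic orbit with period 1112122 over the alphabet {1,2}, attained at a letter 2 in position corresponding to \overline{1112^*122}, equals 2·√2026/27 = 3.3341562…; that is, sup over k of λ_k of this periodic sequence equals [2;1,2,2,\overline{1,1,1,2,1,2,2}] + [0;1,1,1,\overline{2,2,1,2,1,1,1}] = 2√2026/27. -/
open Filter

/-- The `n`-th convergent of the continued fraction `[a 0; a 1, a 2, ...]`. -/
noncomputable def cfConv : ℕ → (ℕ → ℕ) → ℝ
  | 0, a => a 0
  | n+1, a => a 0 + 1 / cfConv n (fun i => a (i+1))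

/-- Value of the infinite continued fraction `[a 0; a 1, a 2, ...]` (limit of convergents). -/
noncomputable def cfVal (a : ℕ → ℕ) : ℝ := limUnder atTop (fun n => cfConv n a)

/-- `λ_k(a) = [a_k; a_{k+1}, …] + [0; a_{k-1}, a_{k-2}, …]`. -/
noncomputable def lam (a : ℤ → ℕ) (k : ℤ) : ℝ :=
  cfVal (fun n => a (k + n)) + (cfVal (fun n => a (k - 1 - n)))⁻¹

/-- The Markov value `m(a) = sup_k λ_k(a)`. -/
noncomputable def markov (a : ℤ → ℕ) : ℝ := ⨆ k : ℤ, lam a k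

/-!
The complete quotients `[a_k; a_{k+1}, …]` of the orbit are the quadratic irrationals
`(P_k + √2026) / Q_k`, and the backward ones `[a_{k-1}; a_{k-2}, …]` are
`(P_k + √2026) / Q_{k-1}`, for the 7-periodic `P = 28, 26, 24, 34, 26, 19, 18` and
`Q = 27, 50, 29, 30, 45, 37, 46`.
This only needs the recurrences `P_k + P_{k+1} = a_k Q_k` and `P_{k+1}² + Q_k Q_{k+1} = 2026`,
checked on one period: a positive bounded solution of `X_n = a_n + 1 / X_{n+1}` is the limit of
the convergents, because the maps `t ↦ a + 1 / t` contract along it. Hence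
`λ_k = (P_k + √2026) / Q_k + (√2026 - P_k) / Q_k = 2√2026 / Q_k`, largest where `Q_k = 27`.
-/

lemma one_le_cfConv (n : ℕ) {a : ℕ → ℕ} (ha : ∀ i, 1 ≤ a i) : 1 ≤ cfConv n a := by
  induction n generalizing a with
  | zero => show (1 : ℝ) ≤ a 0; exact_mod_cast ha 0
  | succ n ih =>
    have h0 : (1 : ℝ) ≤ a 0 := by exact_mod_cast ha 0
    have h1 : 0 < 1 / cfConv n (fun i => a (i + 1)) :=
      one_div_pos.2 (one_pos.trans_le (ih fun i => ha (i + 1)))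
    show 1 ≤ (a 0 : ℝ) + 1 / cfConv n (fun i => a (i + 1))
    linarith

lemma abs_cfConv_sub_le {a : ℕ → ℕ} {X : ℕ → ℝ} {M : ℝ} (ha : ∀ n, 1 ≤ a n)
    (hX : ∀ n, X n = a n + (X (n + 1))⁻¹) (hpos : ∀ n, 0 < X n) (hM : ∀ n, X n ≤ M)
    (n : ℕ) : |cfConv n a - X 0| ≤ (M / (M + 1)) ^ n := by
  have hMpos : 0 < M := (hpos 0).trans_le (hM 0)
  induction n generalizing a X with
  | zero =>
    have h1 : (1 : ℝ) ≤ a 1 := by exact_mod_cast ha 1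
    have hX1 : 1 ≤ X 1 := by rw [hX 1]; linarith [inv_pos.2 (hpos 2)]
    show |(a 0 : ℝ) - X 0| ≤ _
    rw [pow_zero, hX 0, sub_add_cancel_left, abs_neg, abs_inv, abs_of_pos (hpos 1)]
    exact inv_le_one_of_one_le₀ hX1
  | succ n ih =>
    have hX1 : (M + 1) / M ≤ X 1 := by
      have h1 : (1 : ℝ) ≤ a 1 := by exact_mod_cast ha 1
      have h2 : M⁻¹ ≤ (X 2)⁻¹ := inv_anti₀ (hpos 2) (hM 2)
      rw [hX 1, add_div, div_self hMpos.ne', one_div]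
      linarith
    set c := cfConv n (fun i => a (i + 1))
    have hc : 1 ≤ c := one_le_cfConv n fun i => ha (i + 1)
    have hcX : (M + 1) / M ≤ c * X 1 := by nlinarith [hpos 1]
    have ih' : |c - X 1| ≤ (M / (M + 1)) ^ n :=
      ih (fun i => ha (i + 1)) (fun i => hX (i + 1)) (fun i => hpos (i + 1)) (fun i => hM (i + 1))
    show |(a 0 : ℝ) + 1 / c - X 0| ≤ _
    calc |(a 0 : ℝ) + 1 / c - X 0| = |c - X 1| / (c * X 1) := by
          have hc0 : 0 < c := one_pos.trans_le hc
          rw [hX 0, abs_sub_comm, ← abs_of_pos (mul_pos hc0 (hpos 1)), ← abs_div]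
          congr 1
          field_simp [hc0.ne', (hpos 1).ne']
          ring
      _ ≤ (M / (M + 1)) ^ n / ((M + 1) / M) := by gcongr
      _ = (M / (M + 1)) ^ (n + 1) := by rw [pow_succ, div_div_eq_mul_div, mul_div_assoc]

lemma cfVal_eq_of_eq_add_inv {a : ℕ → ℕ} {X : ℕ → ℝ} {M : ℝ} (ha : ∀ n, 1 ≤ a n)
    (hX : ∀ n, X n = a n + (X (n + 1))⁻¹) (hpos : ∀ n, 0 < X n) (hM : ∀ n, X n ≤ M) :
    cfVal a = X 0 := by
  have hMpos : 0 < M := (hpos 0).trans_le (hM 0)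
  have hgeo : Tendsto (fun n => (M / (M + 1)) ^ n) atTop (nhds 0) :=
    tendsto_pow_atTop_nhds_zero_of_lt_one (by positivity)
      ((div_lt_one (by linarith)).2 (by linarith))
  refine (tendsto_sub_nhds_zero_iff.1 (squeeze_zero_norm (fun n => ?_) hgeo)).limUnder_eq
  exact abs_cfConv_sub_le ha hX hpos hM n

lemma inv_add_div_eq_sub_div {p q q' s : ℝ} (h : p ^ 2 + q * q' = s ^ 2) (hq' : q' ≠ 0)
    (hps : 0 < p + s) : ((p + s) / q)⁻¹ = (s - p) / q' := by
  rw [inv_div, div_eq_div_iff hps.ne' hq']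
  linear_combination h

/-- The recurrences making `(P k + √D) / Q k` the complete quotient `[a k; a (k+1), …]` and
`(P k + √D) / Q (k - 1)` the backward one `[a (k-1); a (k-2), …]`. -/
structure IsCompleteQuotientCycle (D : ℕ) (a P Q : ℤ → ℕ) : Prop where
  one_le : ∀ k, 1 ≤ a k
  pos : ∀ k, 0 < Q k
  add_eq : ∀ k, P k + P (k + 1) = a k * Q k
  sq_add_mul_eq : ∀ k, P (k + 1) ^ 2 + Q k * Q (k + 1) = D

namespace IsCompleteQuotientCycle

variable {D : ℕ} {a P Q : ℤ → ℕ}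

lemma cast_sq_add_mul_eq (h : IsCompleteQuotientCycle D a P Q) (k : ℤ) :
    (P k : ℝ) ^ 2 + Q (k - 1) * Q k = √D ^ 2 := by
  rw [Real.sq_sqrt (Nat.cast_nonneg D)]
  exact_mod_cast sub_add_cancel k 1 ▸ h.sq_add_mul_eq (k - 1)

lemma sqrt_pos (h : IsCompleteQuotientCycle D a P Q) : 0 < √(D : ℝ) := by
  have := h.sq_add_mul_eq 0
  have := Nat.mul_pos (h.pos 0) (h.pos (0 + 1))
  exact Real.sqrt_pos.2 (by exact_mod_cast (show 0 < D by omega))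

lemma cast_pos (h : IsCompleteQuotientCycle D a P Q) (k : ℤ) : (0 : ℝ) < Q k := by
  exact_mod_cast h.pos k

lemma add_sqrt_pos (h : IsCompleteQuotientCycle D a P Q) (k : ℤ) : 0 < (P k : ℝ) + √D := by
  have := h.sqrt_pos
  positivity

lemma cast_le_sqrt (h : IsCompleteQuotientCycle D a P Q) (k : ℤ) : (P k : ℝ) ≤ √D := by
  have hsq := h.cast_sq_add_mul_eq k
  have := mul_pos (h.cast_pos (k - 1)) (h.cast_pos k)
  rw [Real.sq_sqrt (Nat.cast_nonneg D)] at hsq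
  exact Real.le_sqrt_of_sq_le (by linarith)

lemma add_sqrt_div_pos (h : IsCompleteQuotientCycle D a P Q) (j k : ℤ) :
    0 < (P j + √D) / Q k :=
  _root_.div_pos (h.add_sqrt_pos j) (h.cast_pos k)

lemma add_sqrt_div_le (h : IsCompleteQuotientCycle D a P Q) (j k : ℤ) :
    (P j + √D) / Q k ≤ 2 * √D := by
  have hP := h.cast_le_sqrt j
  have hQ : (1 : ℝ) ≤ Q k := by exact_mod_cast h.pos k
  calc (P j + √D) / Q k ≤ P j + √D := div_le_self (by positivity) hQ
    _ ≤ 2 * √D := by linarith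

lemma forward_recurrence (h : IsCompleteQuotientCycle D a P Q) (k : ℤ) :
    (P k + √D) / Q k = a k + ((P (k + 1) + √D) / Q (k + 1))⁻¹ := by
  have hQ := (h.cast_pos k).ne'
  have hadd : (P k : ℝ) + P (k + 1) = a k * Q k := by exact_mod_cast h.add_eq k
  have hsq := h.cast_sq_add_mul_eq (k + 1)
  rw [add_sub_cancel_right, mul_comm] at hsq
  rw [inv_add_div_eq_sub_div hsq hQ (h.add_sqrt_pos (k + 1))]
  field_simp
  linear_combination hadd

lemma backward_recurrence (h : IsCompleteQuotientCycle D a P Q) (k : ℤ) :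
    (P (k + 1) + √D) / Q k = a k + ((P k + √D) / Q (k - 1))⁻¹ := by
  have hQ := (h.cast_pos k).ne'
  have hadd : (P k : ℝ) + P (k + 1) = a k * Q k := by exact_mod_cast h.add_eq k
  rw [inv_add_div_eq_sub_div (h.cast_sq_add_mul_eq k) hQ (h.add_sqrt_pos k)]
  field_simp
  linear_combination hadd

lemma cfVal_forward (h : IsCompleteQuotientCycle D a P Q) (k : ℤ) :
    cfVal (fun n => a (k + n)) = (P k + √D) / Q k := by
  simpa using cfVal_eq_of_eq_add_inv (X := fun n : ℕ => (P (k + n) + √D) / Q (k + n))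
    (fun n => h.one_le _) (fun n => by simpa [add_assoc] using h.forward_recurrence (k + n))
    (fun n => h.add_sqrt_div_pos _ _) (fun n => h.add_sqrt_div_le _ _)

lemma cfVal_backward (h : IsCompleteQuotientCycle D a P Q) (k : ℤ) :
    cfVal (fun n => a (k - 1 - n)) = (P k + √D) / Q (k - 1) := by
  refine (cfVal_eq_of_eq_add_inv (X := fun n : ℕ => (P (k - n) + √D) / Q (k - 1 - n))
    (fun n => h.one_le _) (fun n => ?_) (fun n => h.add_sqrt_div_pos _ _)
    (fun n => h.add_sqrt_div_le _ _)).trans (by simp)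
  have hk : k - 1 - n + 1 = k - n := by ring
  have hk' : k - ((n + 1 : ℕ) : ℤ) = k - 1 - n := by push_cast; ring
  have hk'' : k - 1 - ((n + 1 : ℕ) : ℤ) = k - 1 - n - 1 := by push_cast; ring
  rw [hk', hk'', ← hk]
  exact h.backward_recurrence (k - 1 - n)

lemma lam_eq (h : IsCompleteQuotientCycle D a P Q) (k : ℤ) : lam a k = 2 * √D / Q k := by
  rw [lam, h.cfVal_forward, h.cfVal_backward,
    inv_add_div_eq_sub_div (h.cast_sq_add_mul_eq k) (h.cast_pos k).ne' (h.add_sqrt_pos k),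
    ← add_div]
  ring

lemma markov_eq (h : IsCompleteQuotientCycle D a P Q) {k₀ : ℤ} (hmin : ∀ k, Q k₀ ≤ Q k) :
    markov a = 2 * √D / Q k₀ := by
  have hle : ∀ k, lam a k ≤ lam a k₀ := fun k => by
    have := h.sqrt_pos
    have := h.cast_pos k₀
    rw [h.lam_eq, h.lam_eq]
    gcongr
    exact_mod_cast hmin k
  rw [markov, ← h.lam_eq]
  exact le_antisymm (ciSup_le hle) (le_ciSup ⟨_, Set.forall_mem_range.2 hle⟩ k₀)

end IsCompleteQuotientCycle

lemma periodize_periodic (w : List ℕ) : Function.Periodic (periodize w) w.length := by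
  intro k
  simp [periodize]

lemma periodize_mem {w : List ℕ} (hw : w ≠ []) (k : ℤ) : periodize w k ∈ w := by
  have hlen : (0 : ℤ) < w.length := by exact_mod_cast List.length_pos_iff.2 hw
  have hlt : (k % w.length).toNat < w.length := by
    have := Int.emod_lt_of_pos k hlen
    omega
  simp only [periodize, List.getD_eq_getElem _ _ hlt]
  exact List.getElem_mem hlt

theorem isCompleteQuotientCycle_2122111 :
    IsCompleteQuotientCycle 2026 (periodize [2, 1, 2, 2, 1, 1, 1])
      (periodize [28, 26, 24, 34, 26, 19, 18]) (periodize [27, 50, 29, 30, 45, 37, 46]) := by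
  set a := periodize [2, 1, 2, 2, 1, 1, 1]
  set P := periodize [28, 26, 24, 34, 26, 19, 18]
  set Q := periodize [27, 50, 29, 30, 45, 37, 46]
  let F : ℤ → Prop := fun k =>
    1 ≤ a k ∧ 0 < Q k ∧ P k + P (k + 1) = a k * Q k ∧ P (k + 1) ^ 2 + Q k * Q (k + 1) = 2026
  have hF : Function.Periodic F 7 := by
    have ha : Function.Periodic a 7 := periodize_periodic _
    have hP : Function.Periodic P 7 := periodize_periodic _
    have hQ : Function.Periodic Q 7 := periodize_periodic _
    intro k
    simp only [F, add_right_comm k 7 1, ha k, hP k, hP (k + 1), hQ k, hQ (k + 1)]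
  have hF₀ : ∀ r ∈ Set.Ico (0 : ℤ) 7, F r := by
    rintro r ⟨h0, h7⟩
    interval_cases r <;> decide
  have H : ∀ k, F k := fun k => by
    obtain ⟨r, hr, hkr⟩ := hF.exists_mem_Ico₀ (by norm_num) k
    exact hkr ▸ hF₀ r hr
  exact ⟨fun k => (H k).1, fun k => (H k).2.1, fun k => (H k).2.2.1, fun k => (H k).2.2.2⟩

/-- The Markov value of the periodic orbit with period `1112122`, attained at the marked
letter 2 of `‾1112∗122` (position 0), equals `2√2026/27 = 3.3341562…`. -/
theorem markov_value_1112122 :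
    markov (periodize [2,1,2,2,1,1,1]) = 2 * Real.sqrt 2026 / 27 ∧
    lam (periodize [2,1,2,2,1,1,1]) 0 = 2 * Real.sqrt 2026 / 27 := by
  have h := isCompleteQuotientCycle_2122111
  set Q := periodize [27, 50, 29, 30, 45, 37, 46]
  have hQ₀ : Q 0 = 27 := rfl
  have hmin (k : ℤ) : Q 0 ≤ Q k := by
    have hk : Q k ∈ [27, 50, 29, 30, 45, 37, 46] := periodize_mem (List.cons_ne_nil _ _) k
    simp only [List.mem_cons, List.not_mem_nil, or_false] at hk
    omega
  refine ⟨?_, ?_⟩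
  · rw [h.markov_eq hmin, hQ₀]
    norm_num
  · rw [h.lam_eq, hQ₀]
    norm_num
end

section
/- Among all bi-infinite sequences over the alphabet {1,2,3} avoiding the subwords 13, 31, 32322 and 32323 (in both reading directions where relevant), the continued fraction [0; a_1, a_2, …] with a_1 = 2 is maximized by the tail 2,3,2,3,2,1 followed by the periodic repetition of 1,2; that is, for any such admissible sequence starting with 2, [0; a_1, a_2, a_3, …] ≤ [0; 2, 3, 2, 3, 2, 1, \overline{1, 2}]. -/
open Filter Topology

def shf (b : ℕ → ℕ) : ℕ → ℕ := fun n => b (n+1)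

def Ent (b : ℕ → ℕ) : Prop := ∀ n, 1 ≤ b n ∧ b n ≤ 3

lemma cfConv_succ (n : ℕ) (b : ℕ → ℕ) : cfConv (n+1) b = b 0 + 1 / cfConv n (shf b) := rfl

lemma Ent.shf {b : ℕ → ℕ} (hb : Ent b) : Ent (shf b) := fun n => hb (n+1)

lemma cfConv_bounds : ∀ (n : ℕ) (b : ℕ → ℕ), Ent b →
    (1:ℝ) ≤ cfConv n b ∧ cfConv n b ≤ 4 := by
  intro n
  induction n with
  | zero =>
    intro b hb
    have h := hb 0
    simp only [cfConv]
    constructor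
    · exact_mod_cast h.1
    · have : (b 0 : ℝ) ≤ 3 := by exact_mod_cast h.2
      linarith
  | succ n ih =>
    intro b hb
    obtain ⟨h1, h4⟩ := ih (shf b) hb.shf
    have h := hb 0
    have hb0 : (1:ℝ) ≤ b 0 := by exact_mod_cast h.1
    have hb3 : (b 0 : ℝ) ≤ 3 := by exact_mod_cast h.2
    rw [cfConv_succ]
    have hpos : (0:ℝ) < cfConv n (shf b) := by linarith
    have hd1 : 1 / cfConv n (shf b) ≤ 1 := by
      rw [div_le_one hpos]; linarith
    have hd0 : 0 < 1 / cfConv n (shf b) := by positivity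
    constructor <;> linarith

lemma cfConv_bounds1 {b : ℕ → ℕ} (hb : Ent b) (n : ℕ) :
    (b 0:ℝ) + 1/4 ≤ cfConv (n+1) b ∧ cfConv (n+1) b ≤ b 0 + 1 := by
  obtain ⟨h1, h4⟩ := cfConv_bounds n (shf b) hb.shf
  rw [cfConv_succ]
  have hpos : (0:ℝ) < cfConv n (shf b) := by linarith
  constructor
  · have : (1:ℝ)/4 ≤ 1 / cfConv n (shf b) := by
      rw [div_le_div_iff₀ (by norm_num) hpos]; linarith
    linarith
  · have : 1 / cfConv n (shf b) ≤ 1 := by rw [div_le_one hpos]; linarith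
    linarith

lemma cfConv_bounds2 {b : ℕ → ℕ} (hb : Ent b) (n : ℕ) :
    cfConv (n+2) b ≤ (b 0:ℝ) + 4/5 := by
  obtain ⟨h1, _⟩ := cfConv_bounds1 hb.shf n
  have hb1 : (1:ℝ) ≤ (shf b) 0 := by exact_mod_cast (hb.shf 0).1
  rw [show n+2 = (n+1)+1 from rfl, cfConv_succ]
  have hpos : (0:ℝ) < cfConv (n+1) (shf b) := by linarith
  have : 1 / cfConv (n+1) (shf b) ≤ 4/5 := by
    rw [div_le_div_iff₀ hpos (by norm_num)]; linarith
  linarith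

lemma cfConv_cauchy : ∀ (k : ℕ) (b : ℕ → ℕ), Ent b → ∀ n m : ℕ,
    |cfConv (k+1+n) b - cfConv (k+1+m) b| ≤ 3 * (16/25:ℝ)^k := by
  intro k
  induction k with
  | zero =>
    intro b hb n m
    obtain ⟨hn1, hn4⟩ := cfConv_bounds (0+1+n) b hb
    obtain ⟨hm1, hm4⟩ := cfConv_bounds (0+1+m) b hb
    rw [abs_le]
    norm_num
    constructor <;> linarith
  | succ k ih =>
    intro b hb n m
    have e1 : k+1+1+n = (k+1+n)+1 := by omega
    have e2 : k+1+1+m = (k+1+m)+1 := by omega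
    rw [e1, e2, cfConv_succ, cfConv_succ]
    set X := cfConv (k+1+n) (shf b) with hX
    set Y := cfConv (k+1+m) (shf b) with hY
    have hb1 : (1:ℝ) ≤ (shf b) 0 := by exact_mod_cast (hb.shf 0).1
    have hXb : ((shf b) 0:ℝ) + 1/4 ≤ X := by
      rw [hX, show k+1+n = (k+n)+1 from by omega]
      exact (cfConv_bounds1 hb.shf (k+n)).1
    have hYb : ((shf b) 0:ℝ) + 1/4 ≤ Y := by
      rw [hY, show k+1+m = (k+m)+1 from by omega]
      exact (cfConv_bounds1 hb.shf (k+m)).1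
    have hX5 : (5/4:ℝ) ≤ X := by linarith
    have hY5 : (5/4:ℝ) ≤ Y := by linarith
    have hX0 : (0:ℝ) < X := by linarith
    have hY0 : (0:ℝ) < Y := by linarith
    have hIH : |X - Y| ≤ 3 * (16/25:ℝ)^k := ih (shf b) hb.shf n m
    have hkey : (b 0:ℝ) + 1/X - ((b 0:ℝ) + 1/Y) = (Y - X)/(X*Y) := by
      field_simp
      ring
    rw [hkey, abs_div, abs_of_pos (mul_pos hX0 hY0)]
    rw [div_le_iff₀ (mul_pos hX0 hY0)]
    have habs : |Y - X| ≤ 3 * (16/25:ℝ)^k := by rwa [abs_sub_comm]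
    have hXY : (25/16:ℝ) ≤ X*Y := by nlinarith
    have hpow : (0:ℝ) ≤ (16/25:ℝ)^k := by positivity
    calc |Y - X| ≤ 3 * (16/25:ℝ)^k := habs
      _ = (3 * (16/25:ℝ)^(k+1)) * (25/16) := by ring
      _ ≤ (3 * (16/25:ℝ)^(k+1)) * (X*Y) := by
          apply mul_le_mul_of_nonneg_left hXY
          positivity

lemma cf_tendsto {b : ℕ → ℕ} (hb : Ent b) :
    Tendsto (fun n => cfConv n b) atTop (𝓝 (cfVal b)) := by
  have key : ∀ n, dist (cfConv n b) (cfConv (n+1) b) ≤ (75/16) * (16/25:ℝ)^n := by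
    intro n
    cases n with
    | zero =>
      rw [Real.dist_eq, cfConv_succ]
      obtain ⟨h1, h4⟩ := cfConv_bounds 0 (shf b) hb.shf
      have hpos : (0:ℝ) < cfConv 0 (shf b) := by linarith
      have : (cfConv 0 b : ℝ) - (b 0 + 1/cfConv 0 (shf b)) = -(1/cfConv 0 (shf b)) := by
        simp only [cfConv]; ring
      rw [this, abs_neg, abs_of_pos (by positivity), pow_zero, mul_one]
      have : 1 / cfConv 0 (shf b) ≤ 1 := by rw [div_le_one hpos]; linarith
      linarith
    | succ m =>
      have h := cfConv_cauchy m b hb 0 1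
      rw [Real.dist_eq]
      have e1 : m+1+0 = m+1 := by omega
      have e2 : m+1+1 = m+1+1 := rfl
      rw [e1] at h
      calc |cfConv (m+1) b - cfConv (m+1+1) b| ≤ 3 * (16/25:ℝ)^m := h
        _ = (75/16) * (16/25:ℝ)^(m+1) := by ring
  have hC : CauchySeq (fun n => cfConv n b) :=
    cauchySeq_of_le_geometric _ _ (by norm_num) key
  obtain ⟨L, hL⟩ := cauchySeq_tendsto_of_complete hC
  exact tendsto_nhds_limUnder ⟨L, hL⟩

lemma cf_lb {b : ℕ → ℕ} (hb : Ent b) : (b 0:ℝ) + 1/4 ≤ cfVal b := by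
  apply ge_of_tendsto (cf_tendsto hb)
  filter_upwards [eventually_ge_atTop 1] with n hn
  obtain ⟨m, rfl⟩ := Nat.exists_eq_add_of_le hn
  exact (cfConv_bounds1 hb m).1.trans_eq (by rw [Nat.add_comm])

lemma cf_ub {b : ℕ → ℕ} (hb : Ent b) : cfVal b ≤ (b 0:ℝ) + 4/5 := by
  apply le_of_tendsto (cf_tendsto hb)
  filter_upwards [eventually_ge_atTop 2] with n hn
  obtain ⟨m, rfl⟩ := Nat.exists_eq_add_of_le hn
  have := cfConv_bounds2 hb m
  rwa [Nat.add_comm] at this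

lemma cf_pos {b : ℕ → ℕ} (hb : Ent b) : (5/4:ℝ) ≤ cfVal b := by
  have h := cf_lb hb
  have : (1:ℝ) ≤ b 0 := by exact_mod_cast (hb 0).1
  linarith

lemma cf_rec {b : ℕ → ℕ} (hb : Ent b) : cfVal b = b 0 + 1 / cfVal (shf b) := by
  have h1 := cf_tendsto hb
  have h2 := cf_tendsto hb.shf
  have hpos : (5/4:ℝ) ≤ cfVal (shf b) := cf_pos hb.shf
  have h3 : Tendsto (fun n => cfConv (n+1) b) atTop (𝓝 (cfVal b)) :=
    h1.comp (tendsto_add_atTop_nat 1)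
  have h4 : Tendsto (fun n => (b 0:ℝ) + 1/cfConv n (shf b)) atTop
      (𝓝 ((b 0:ℝ) + 1/cfVal (shf b))) :=
    tendsto_const_nhds.add (tendsto_const_nhds.div h2 (by linarith))
  have h5 : (fun n => cfConv (n+1) b) = fun n => (b 0:ℝ) + 1/cfConv n (shf b) := by
    funext n; rw [cfConv_succ]
  rw [h5] at h3
  exact tendsto_nhds_unique h3 h4
def OccursN (u : List ℕ) (a : ℕ → ℕ) : Prop :=
  ∃ k : ℕ, ∀ i : ℕ, i < u.length → a (k + i) = u.getD i 0

def maxTail : ℕ → ℕ := fun n =>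
  if n < 6 then [2,3,2,3,2,1].getD n 0 else if (n - 6) % 2 = 0 then 1 else 2

def Adm (b : ℕ → ℕ) : Prop :=
  (∀ n, b n = 1 ∨ b n = 2 ∨ b n = 3) ∧ ¬ OccursN [1,3] b ∧ ¬ OccursN [3,1] b ∧
    ¬ OccursN [3,2,3,2,2] b ∧ ¬ OccursN [3,2,3,2,3] b

lemma Adm.ent {b : ℕ → ℕ} (h : Adm b) : Ent b := by
  intro n; rcases h.1 n with h'|h'|h' <;> omega

lemma occursN_shf {u : List ℕ} {b : ℕ → ℕ} (h : OccursN u (shf b)) : OccursN u b := by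
  obtain ⟨k, hk⟩ := h
  refine ⟨k+1, fun i hi => ?_⟩
  have := hk i hi
  rw [show k+1+i = (k+i)+1 from by omega]
  exact this

lemma Adm.shf {b : ℕ → ℕ} (h : Adm b) : Adm (shf b) :=
  ⟨fun n => h.1 (n+1), fun hc => h.2.1 (occursN_shf hc), fun hc => h.2.2.1 (occursN_shf hc),
   fun hc => h.2.2.2.1 (occursN_shf hc), fun hc => h.2.2.2.2 (occursN_shf hc)⟩

lemma occ2 {b : ℕ → ℕ} {k x y : ℕ} (h0 : b k = x) (h1 : b (k+1) = y) :
    OccursN [x,y] b := by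
  refine ⟨k, fun i hi => ?_⟩
  simp only [List.length_cons, List.length_nil] at hi
  interval_cases i <;> simpa

lemma occ5 {b : ℕ → ℕ} {k x1 x2 x3 x4 x5 : ℕ} (h1 : b k = x1) (h2 : b (k+1) = x2)
    (h3 : b (k+2) = x3) (h4 : b (k+3) = x4) (h5 : b (k+4) = x5) :
    OccursN [x1,x2,x3,x4,x5] b := by
  refine ⟨k, fun i hi => ?_⟩
  simp only [List.length_cons, List.length_nil] at hi
  interval_cases i <;> simpa

def mtl (k : ℕ) : ℕ → ℕ := fun n => maxTail (n + k)

lemma Ent_maxTail : Ent maxTail := by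
  intro n
  by_cases h : n < 6
  · interval_cases n <;> simp [maxTail]
  · simp only [maxTail, if_neg h]
    split <;> omega

lemma Ent_mt (k : ℕ) : Ent (mtl k) := fun n => Ent_maxTail (n+k)

lemma shf_mt (k : ℕ) : shf (mtl k) = mtl (k+1) :=
  funext fun n => congrArg maxTail (by omega)

lemma mt8 : mtl 8 = mtl 6 := by
  funext n
  show maxTail (n+8) = maxTail (n+6)
  have h8 : ¬ n+8 < 6 := by omega
  have h6 : ¬ n+6 < 6 := by omega
  simp only [maxTail, if_neg h8, if_neg h6]
  have : (n+8-6) % 2 = (n+6-6) % 2 := by omega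
  rw [this]

noncomputable def mv (k : ℕ) : ℝ := cfVal (mtl k)

lemma mt_zero (k : ℕ) : mtl k 0 = maxTail k := congrArg maxTail (Nat.zero_add k)

lemma mv_rec (k : ℕ) : mv k = maxTail k + 1 / mv (k+1) := by
  rw [mv, cf_rec (Ent_mt k), shf_mt, mt_zero, mv]

lemma mv_lb (k : ℕ) : (maxTail k : ℝ) + 1/4 ≤ mv k := by
  have := cf_lb (Ent_mt k)
  rwa [mt_zero] at this

lemma mv_ub (k : ℕ) : mv k ≤ (maxTail k : ℝ) + 4/5 := by
  have := cf_ub (Ent_mt k)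
  rwa [mt_zero] at this

lemma mv_pos (k : ℕ) : (5/4:ℝ) ≤ mv k := cf_pos (Ent_mt k)

lemma mv86 : mv 8 = mv 6 := congrArg cfVal mt8

lemma mx0 : maxTail 0 = 2 := rfl
lemma mx1 : maxTail 1 = 3 := rfl
lemma mx2 : maxTail 2 = 2 := rfl
lemma mx3 : maxTail 3 = 3 := rfl
lemma mx4 : maxTail 4 = 2 := rfl
lemma mx5 : maxTail 5 = 1 := rfl
lemma mx6 : maxTail 6 = 1 := rfl
lemma mx7 : maxTail 7 = 2 := rfl

lemma cf_step {x m e : ℝ} (hx : 5/4 ≤ x) (hm : 5/4 ≤ m) (he : 0 ≤ e)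
    (h : x ≤ m + e) : 1/m - 1/x ≤ 16/25 * e := by
  have hx0 : (0:ℝ) < x := by linarith
  have hm0 : (0:ℝ) < m := by linarith
  have h1 : 1/m - 1/x = (x - m)/(m*x) := by field_simp
  rw [h1, div_le_iff₀ (by positivity)]
  have hmx : (25/16:ℝ) ≤ m*x := by nlinarith
  have := mul_le_mul_of_nonneg_left hmx he
  nlinarith
lemma cf_ub' {b : ℕ → ℕ} (hb : Ent b) : cfVal b ≤ 19/5 := by
  have h := cf_ub hb
  have h3 : (b 0:ℝ) ≤ 3 := by exact_mod_cast (hb 0).2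
  linarith

lemma inv45 {x : ℝ} (hx : 5/4 ≤ x) : 0 < 1/x ∧ 1/x ≤ 4/5 := by
  have h0 : (0:ℝ) < x := by linarith
  constructor
  · positivity
  · rw [div_le_div_iff₀ h0 (by norm_num)]; linarith

lemma mv0r : mv 0 = 2 + 1/mv 1 := by rw [mv_rec 0, mx0]; norm_num
lemma mv1r : mv 1 = 3 + 1/mv 2 := by rw [mv_rec 1, mx1]; norm_num
lemma mv2r : mv 2 = 2 + 1/mv 3 := by rw [mv_rec 2, mx2]; norm_num
lemma mv3r : mv 3 = 3 + 1/mv 4 := by rw [mv_rec 3, mx3]; norm_num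
lemma mv4r : mv 4 = 2 + 1/mv 5 := by rw [mv_rec 4, mx4]; norm_num
lemma mv5r : mv 5 = 1 + 1/mv 6 := by rw [mv_rec 5, mx5]; norm_num
lemma mv6r : mv 6 = 1 + 1/mv 7 := by rw [mv_rec 6, mx6]; norm_num
lemma mv7r : mv 7 = 2 + 1/mv 6 := by rw [mv_rec 7, mx7, mv86]; norm_num

lemma mv1_lb : (13/4:ℝ) ≤ mv 1 := by
  have := mv_lb 1; rw [mx1] at this; push_cast at this; linarith
lemma mv2_ub : mv 2 ≤ (14/5:ℝ) := by
  have := mv_ub 2; rw [mx2] at this; push_cast at this; linarith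
lemma mv3_lb : (13/4:ℝ) ≤ mv 3 := by
  have := mv_lb 3; rw [mx3] at this; push_cast at this; linarith
lemma mv4_ub : mv 4 ≤ (14/5:ℝ) := by
  have := mv_ub 4; rw [mx4] at this; push_cast at this; linarith
lemma mv6_ub : mv 6 ≤ (9/5:ℝ) := by
  have := mv_ub 6; rw [mx6] at this; push_cast at this; linarith
lemma mv7_lb : (9/4:ℝ) ≤ mv 7 := by
  have := mv_lb 7; rw [mx7] at this; push_cast at this; linarith

lemma main_claims : ∀ n : ℕ,
    (∀ b : ℕ → ℕ, Adm b → cfVal b ≤ mv 1 + 3*(16/25:ℝ)^n) ∧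
    (∀ b : ℕ → ℕ, Adm b → b 0 = 3 → mv 2 - 3*(16/25:ℝ)^n ≤ cfVal (shf b)) ∧
    (∀ b : ℕ → ℕ, Adm b → b 0 = 3 → b 1 = 2 →
      cfVal (shf (shf b)) ≤ mv 3 + 3*(16/25:ℝ)^n) ∧
    (∀ b : ℕ → ℕ, Adm b → b 0 = 3 → b 1 = 2 → b 2 = 3 →
      mv 4 - 3*(16/25:ℝ)^n ≤ cfVal (shf (shf (shf b)))) ∧
    (∀ b : ℕ → ℕ, Adm b → b 0 = 3 → b 1 = 2 → b 2 = 3 → b 3 = 2 →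
      cfVal (shf (shf (shf (shf b)))) ≤ mv 5 + 3*(16/25:ℝ)^n) ∧
    (∀ b : ℕ → ℕ, Adm b → mv 6 - 3*(16/25:ℝ)^n ≤ cfVal b) ∧
    (∀ b : ℕ → ℕ, Adm b → b 0 = 1 → cfVal (shf b) ≤ mv 7 + 3*(16/25:ℝ)^n) := by
  intro n
  induction n with
  | zero =>
    simp only [pow_zero, mul_one]
    refine ⟨?_, ?_, ?_, ?_, ?_, ?_, ?_⟩
    · intro b hb
      have := cf_ub' hb.ent; have := mv_pos 1; linarith
    · intro b hb _
      have := cf_pos hb.ent.shf; have := cf_ub' (Ent_mt 2); linarith [mv_pos 2, mv2_ub]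
    · intro b hb _ _
      have := cf_ub' hb.ent.shf.shf; have := mv_pos 3; linarith
    · intro b hb _ _ _
      have := cf_pos hb.ent.shf.shf.shf; linarith [mv4_ub]
    · intro b hb _ _ _ _
      have := cf_ub' hb.ent.shf.shf.shf.shf; have := mv_pos 5; linarith
    · intro b hb
      have := cf_pos hb.ent; linarith [mv6_ub]
    · intro b hb _
      have := cf_ub' hb.ent.shf; have := mv_pos 7; linarith
  | succ n ih =>
    obtain ⟨C1, C2, C3, C4, C5, C6, C7⟩ := ih
    have hE : (0:ℝ) ≤ 3*(16/25:ℝ)^n := by positivity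
    have hE1 : (0:ℝ) ≤ 3*(16/25:ℝ)^(n+1) := by positivity
    have hpow : (3:ℝ)*(16/25:ℝ)^(n+1) = 16/25*(3*(16/25:ℝ)^n) := by ring
    refine ⟨?_, ?_, ?_, ?_, ?_, ?_, ?_⟩
    · -- C1 : max over all admissible
      intro b hb
      have hent := hb.ent
      have hrec : cfVal b = (b 0:ℝ) + 1/cfVal (shf b) := cf_rec hent
      have hx5 : (5/4:ℝ) ≤ cfVal (shf b) := cf_pos hent.shf
      obtain ⟨hi0, hi45⟩ := inv45 hx5
      rcases hb.1 0 with h|h|h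
      · rw [h] at hrec; push_cast at hrec
        linarith [mv1_lb]
      · rw [h] at hrec; push_cast at hrec
        linarith [mv1_lb]
      · have h2 := C2 b hb h
        have hstep := cf_step (mv_pos 2) hx5 hE (by linarith)
        rw [h] at hrec; push_cast at hrec
        linarith [mv1r]
    · -- C2 : min, context b0 = 3
      intro b hb h0
      have hent := hb.ent
      have hrec : cfVal (shf b) = (b 1:ℝ) + 1/cfVal (shf (shf b)) := by
        have h := cf_rec hent.shf
        rwa [show shf b 0 = b 1 from rfl] at h
      have hx5 : (5/4:ℝ) ≤ cfVal (shf (shf b)) := cf_pos hent.shf.shf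
      obtain ⟨hi0, hi45⟩ := inv45 hx5
      rcases hb.1 1 with h|h|h
      · exact absurd (occ2 (k := 0) h0 h) hb.2.2.1
      · have h3 := C3 b hb h0 h
        have hstep := cf_step hx5 (mv_pos 3) hE h3
        rw [h] at hrec; push_cast at hrec
        linarith [mv2r]
      · rw [h] at hrec; push_cast at hrec
        linarith [mv2_ub]
    · -- C3 : max, context 3,2
      intro b hb h0 h1
      have hent := hb.ent
      have hrec : cfVal (shf (shf b)) = (b 2:ℝ) + 1/cfVal (shf (shf (shf b))) := by
        have h := cf_rec hent.shf.shf
        rwa [show shf (shf b) 0 = b 2 from rfl] at h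
      have hx5 : (5/4:ℝ) ≤ cfVal (shf (shf (shf b))) := cf_pos hent.shf.shf.shf
      obtain ⟨hi0, hi45⟩ := inv45 hx5
      rcases hb.1 2 with h|h|h
      · rw [h] at hrec; push_cast at hrec
        linarith [mv3_lb]
      · rw [h] at hrec; push_cast at hrec
        linarith [mv3_lb]
      · have h4 := C4 b hb h0 h1 h
        have hstep := cf_step (mv_pos 4) hx5 hE (by linarith)
        rw [h] at hrec; push_cast at hrec
        linarith [mv3r]
    · -- C4 : min, context 3,2,3
      intro b hb h0 h1 h2
      have hent := hb.ent
      have hrec : cfVal (shf (shf (shf b))) =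
          (b 3:ℝ) + 1/cfVal (shf (shf (shf (shf b)))) := by
        have h := cf_rec hent.shf.shf.shf
        rwa [show shf (shf (shf b)) 0 = b 3 from rfl] at h
      have hx5 : (5/4:ℝ) ≤ cfVal (shf (shf (shf (shf b)))) := cf_pos hent.shf.shf.shf.shf
      obtain ⟨hi0, hi45⟩ := inv45 hx5
      rcases hb.1 3 with h|h|h
      · exact absurd (occ2 (k := 2) h2 h) hb.2.2.1
      · have h5 := C5 b hb h0 h1 h2 h
        have hstep := cf_step hx5 (mv_pos 5) hE h5
        rw [h] at hrec; push_cast at hrec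
        linarith [mv4r]
      · rw [h] at hrec; push_cast at hrec
        linarith [mv4_ub]
    · -- C5 : max, context 3,2,3,2 (forced letter 1)
      intro b hb h0 h1 h2 h3
      have hent := hb.ent
      have hrec : cfVal (shf (shf (shf (shf b)))) =
          (b 4:ℝ) + 1/cfVal (shf (shf (shf (shf (shf b))))) := by
        have h := cf_rec hent.shf.shf.shf.shf
        rwa [show shf (shf (shf (shf b))) 0 = b 4 from rfl] at h
      have hx5 : (5/4:ℝ) ≤ cfVal (shf (shf (shf (shf (shf b))))) :=
        cf_pos hent.shf.shf.shf.shf.shf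
      obtain ⟨hi0, hi45⟩ := inv45 hx5
      rcases hb.1 4 with h|h|h
      · have h6 := C6 (shf (shf (shf (shf (shf b))))) hb.shf.shf.shf.shf.shf
        have hstep := cf_step (mv_pos 6) hx5 hE (by linarith)
        rw [h] at hrec; push_cast at hrec
        linarith [mv5r]
      · exact absurd (occ5 (k := 0) h0 h1 h2 h3 h) hb.2.2.2.1
      · exact absurd (occ5 (k := 0) h0 h1 h2 h3 h) hb.2.2.2.2
    · -- C6 : min over all admissible
      intro b hb
      have hent := hb.ent
      have hrec : cfVal b = (b 0:ℝ) + 1/cfVal (shf b) := cf_rec hent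
      have hx5 : (5/4:ℝ) ≤ cfVal (shf b) := cf_pos hent.shf
      obtain ⟨hi0, hi45⟩ := inv45 hx5
      rcases hb.1 0 with h|h|h
      · have h7 := C7 b hb h
        have hstep := cf_step hx5 (mv_pos 7) hE h7
        rw [h] at hrec; push_cast at hrec
        linarith [mv6r]
      · rw [h] at hrec; push_cast at hrec
        linarith [mv6_ub]
      · rw [h] at hrec; push_cast at hrec
        linarith [mv6_ub]
    · -- C7 : max, context letter 1
      intro b hb h0
      have hent := hb.ent
      have hrec : cfVal (shf b) = (b 1:ℝ) + 1/cfVal (shf (shf b)) := by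
        have h := cf_rec hent.shf
        rwa [show shf b 0 = b 1 from rfl] at h
      have hx5 : (5/4:ℝ) ≤ cfVal (shf (shf b)) := cf_pos hent.shf.shf
      obtain ⟨hi0, hi45⟩ := inv45 hx5
      rcases hb.1 1 with h|h|h
      · rw [h] at hrec; push_cast at hrec
        linarith [mv7_lb]
      · have h6 := C6 (shf (shf b)) hb.shf.shf
        have hstep := cf_step (mv_pos 6) hx5 hE (by linarith)
        rw [h] at hrec; push_cast at hrec
        linarith [mv7r]
      · exact absurd (occ2 (k := 0) h0 h) hb.2.1
/-- Among infinite sequences over {1,2,3} avoiding the subwords 13, 31, 32322, 32323,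
any continued fraction `[0; a₁, a₂, …]` with `a₁ = 2` is at most
`[0; 2, 3, 2, 3, 2, 1, ‾1,2]`. -/
theorem cf_max_start_two (a : ℕ → ℕ) (ha : ∀ n, a n = 1 ∨ a n = 2 ∨ a n = 3)
    (h13 : ¬ OccursN [1,3] a) (h31 : ¬ OccursN [3,1] a)
    (h32322 : ¬ OccursN [3,2,3,2,2] a) (h32323 : ¬ OccursN [3,2,3,2,3] a)
    (h0 : a 0 = 2) :
    (cfVal a)⁻¹ ≤ (cfVal maxTail)⁻¹ := by
  have hAdm : Adm a := ⟨ha, h13, h31, h32322, h32323⟩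
  have hent := hAdm.ent
  have hmt : cfVal maxTail = mv 0 := by
    have h : mtl 0 = maxTail := funext fun n => congrArg maxTail (Nat.add_zero n)
    rw [mv, h]
  have key : ∀ n : ℕ, mv 0 ≤ cfVal a + 3*(16/25:ℝ)^(n+1) := by
    intro n
    obtain ⟨C1, _⟩ := main_claims n
    have hE : (0:ℝ) ≤ 3*(16/25:ℝ)^n := by positivity
    have hrec : cfVal a = (a 0:ℝ) + 1/cfVal (shf a) := cf_rec hent
    rw [h0] at hrec; push_cast at hrec
    have hx5 : (5/4:ℝ) ≤ cfVal (shf a) := cf_pos hent.shf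
    have h1 := C1 (shf a) hAdm.shf
    have hstep := cf_step hx5 (mv_pos 1) hE h1
    have hpow : (3:ℝ)*(16/25:ℝ)^(n+1) = 16/25*(3*(16/25:ℝ)^n) := by ring
    linarith [mv0r]
  have hlim : Filter.Tendsto (fun n : ℕ => cfVal a + 3*(16/25:ℝ)^(n+1)) Filter.atTop
      (𝓝 (cfVal a + 0)) := by
    apply Filter.Tendsto.const_add
    have h := tendsto_pow_atTop_nhds_zero_of_lt_one (by norm_num : (0:ℝ) ≤ 16/25)
      (by norm_num : (16/25:ℝ) < 1)
    have h2 := (h.comp (Filter.tendsto_add_atTop_nat 1)).const_mul (3:ℝ)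
    simpa using h2
  have hM : mv 0 ≤ cfVal a := by
    have := ge_of_tendsto' hlim key
    linarith
  rw [hmt]
  have hpos : (0:ℝ) < mv 0 := by linarith [mv_pos 0]
  exact inv_anti₀ hpos hM
end

section
/- Among all infinite sequences over {1,2,3} avoiding the subwords 13, 31, 32322, 32323, any continued fraction beginning [0; 2, 3, …] is minimized by [0; 2, 3, 3, 2, 3, 2, 1, \overline{1, 2}]; that is, for every admissible sequence with a_1 = 2, a_2 = 3, one has [0; a_1, a_2, a_3, …] ≥ [0; 2, 3, 3, 2, 3, 2, 1, \overline{1, 2}]. -/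
open Filter

/-- The sequence `2,3,3,2,3,2,1` followed by the periodic repetition of `1,2`. -/
def minTail : ℕ → ℕ := fun n =>
  if n < 7 then [2,3,3,2,3,2,1].getD n 0 else if (n - 7) % 2 = 0 then 1 else 2

namespace CFAux

def Pos (a : ℕ → ℕ) : Prop := ∀ n, 1 ≤ a n

lemma pos_shift {a : ℕ → ℕ} (h : Pos a) : Pos (fun i => a (i+1)) := fun n => h _

lemma one_le_cast {a : ℕ → ℕ} (h : Pos a) (n : ℕ) : (1:ℝ) ≤ (a n : ℝ) := by
  exact_mod_cast h n

lemma cfConv_bounds : ∀ (n : ℕ) (a : ℕ → ℕ), Pos a →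
    (a 0 : ℝ) ≤ cfConv n a ∧ cfConv n a ≤ (a 0 : ℝ) + 1
  | 0, a, h => by simp [cfConv]
  | n+1, a, h => by
    have ih := cfConv_bounds n (fun i => a (i+1)) (pos_shift h)
    have h1 : (1:ℝ) ≤ cfConv n (fun i => a (i+1)) := le_trans (one_le_cast h 1) ih.1
    have h0 : (0:ℝ) < cfConv n (fun i => a (i+1)) := lt_of_lt_of_le one_pos h1
    constructor
    · simp only [cfConv]
      have : 0 < 1 / cfConv n (fun i => a (i+1)) := by positivity
      linarith
    · simp only [cfConv]
      have : 1 / cfConv n (fun i => a (i+1)) ≤ 1 := by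
        rw [div_le_one h0]; exact h1
      linarith

lemma one_le_cfConv {a : ℕ → ℕ} (h : Pos a) (n : ℕ) : (1:ℝ) ≤ cfConv n a :=
  le_trans (one_le_cast h 0) (cfConv_bounds n a h).1

lemma cfConv_pos {a : ℕ → ℕ} (h : Pos a) (n : ℕ) : (0:ℝ) < cfConv n a :=
  lt_of_lt_of_le one_pos (one_le_cfConv h n)

lemma dist_le : ∀ (n : ℕ) (a : ℕ → ℕ), Pos a →
    |cfConv (n+1) a - cfConv n a| ≤ (1/2 : ℝ)^n
  | 0, a, h => by
    simp only [cfConv, pow_zero]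
    have h1 : (1:ℝ) ≤ (a 1 : ℝ) := one_le_cast h 1
    have e : ((a 0:ℝ) + 1 / (a 1:ℝ)) - (a 0:ℝ) = 1 / (a 1:ℝ) := by ring
    rw [e, abs_of_nonneg (by positivity)]
    rw [div_le_one (by linarith)]; exact h1
  | 1, a, h => by
    have h1 : (1:ℝ) ≤ (a 1 : ℝ) := one_le_cast h 1
    have h2 : (1:ℝ) ≤ (a 2 : ℝ) := one_le_cast h 2
    simp only [cfConv]
    have e1 : ((a 0:ℝ) + 1 / ((a 1:ℝ) + 1 / (a 2:ℝ))) - ((a 0:ℝ) + 1 / (a 1:ℝ))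
        = -(1 / ((a 1:ℝ) * ((a 1:ℝ) * (a 2:ℝ) + 1))) := by
      field_simp
      ring
    have hm : (1:ℝ) ≤ (a 1:ℝ) * (a 2:ℝ) := by nlinarith
    have hp : (2:ℝ) ≤ (a 1:ℝ) * ((a 1:ℝ) * (a 2:ℝ) + 1) := by nlinarith
    rw [e1, abs_neg, abs_of_nonneg (by positivity), pow_one]
    rw [div_le_div_iff₀ (by linarith) (by norm_num)]
    linarith
  | n+2, a, h => by
    have hss : Pos (fun i => a (i+2)) := fun m => h _
    have ih := dist_le n (fun i => a (i+2)) hss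
    set X := cfConv (n+1) (fun i => a (i+2)) with hX
    set Y := cfConv n (fun i => a (i+2)) with hY
    have hX1 : (1:ℝ) ≤ X := one_le_cfConv hss (n+1)
    have hY1 : (1:ℝ) ≤ Y := one_le_cfConv hss n
    have hc : (1:ℝ) ≤ (a 1 : ℝ) := one_le_cast h 1
    have hcx : (2:ℝ) ≤ (a 1:ℝ) * X + 1 := by nlinarith
    have hcy : (2:ℝ) ≤ (a 1:ℝ) * Y + 1 := by nlinarith
    have h4 : (4:ℝ) ≤ ((a 1:ℝ) * X + 1) * ((a 1:ℝ) * Y + 1) := by nlinarith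
    have e2 : cfConv (n+2+1) a - cfConv (n+2) a
        = (X - Y) / (((a 1:ℝ) * X + 1) * ((a 1:ℝ) * Y + 1)) := by
      show ((a 0:ℝ) + 1 / cfConv (n+2) (fun i => a (i+1)))
          - ((a 0:ℝ) + 1 / cfConv (n+1) (fun i => a (i+1))) = _
      have eX : cfConv (n+2) (fun i => a (i+1)) = (a 1:ℝ) + 1 / X := rfl
      have eY : cfConv (n+1) (fun i => a (i+1)) = (a 1:ℝ) + 1 / Y := rfl
      rw [eX, eY]
      have hX0 : X ≠ 0 := by linarith
      have hY0 : Y ≠ 0 := by linarith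
      have hcx0 : (a 1:ℝ) * X + 1 ≠ 0 := by linarith
      have hcy0 : (a 1:ℝ) * Y + 1 ≠ 0 := by linarith
      field_simp
      ring
    rw [e2, abs_div]
    rw [abs_of_nonneg (by linarith : (0:ℝ) ≤ ((a 1:ℝ) * X + 1) * ((a 1:ℝ) * Y + 1))]
    calc |X - Y| / (((a 1:ℝ) * X + 1) * ((a 1:ℝ) * Y + 1))
        ≤ |X - Y| / 4 := by gcongr
      _ ≤ (1/2:ℝ)^n / 4 := by gcongr
      _ = (1/2:ℝ)^(n+2) := by ring

lemma cauchy {a : ℕ → ℕ} (h : Pos a) : CauchySeq (fun n => cfConv n a) := by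
  apply cauchySeq_of_le_geometric (1/2) 1 (by norm_num)
  intro n
  rw [Real.dist_eq, abs_sub_comm, one_mul]
  exact dist_le n a h

lemma tendsto_cfVal {a : ℕ → ℕ} (h : Pos a) :
    Tendsto (fun n => cfConv n a) atTop (nhds (cfVal a)) := by
  obtain ⟨L, hL⟩ := cauchySeq_tendsto_of_complete (cauchy h)
  rwa [cfVal, hL.limUnder_eq]

lemma cfVal_lower {a : ℕ → ℕ} (h : Pos a) : (a 0 : ℝ) ≤ cfVal a :=
  ge_of_tendsto' (tendsto_cfVal h) (fun n => (cfConv_bounds n a h).1)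

lemma cfVal_upper {a : ℕ → ℕ} (h : Pos a) : cfVal a ≤ (a 0 : ℝ) + 1 :=
  le_of_tendsto' (tendsto_cfVal h) (fun n => (cfConv_bounds n a h).2)

lemma one_le_cfVal {a : ℕ → ℕ} (h : Pos a) : (1:ℝ) ≤ cfVal a :=
  le_trans (one_le_cast h 0) (cfVal_lower h)

lemma cfVal_eq {a : ℕ → ℕ} (h : Pos a) :
    cfVal a = (a 0 : ℝ) + 1 / cfVal (fun i => a (i+1)) := by
  have hs : Pos (fun i => a (i+1)) := pos_shift h
  have h1 : (1:ℝ) ≤ cfVal (fun i => a (i+1)) := one_le_cfVal hs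
  have hne : cfVal (fun i => a (i+1)) ≠ 0 := by linarith
  have t1 : Tendsto (fun n => (a 0:ℝ) + 1 / cfConv n (fun i => a (i+1))) atTop
      (nhds ((a 0:ℝ) + 1 / cfVal (fun i => a (i+1)))) := by
    exact tendsto_const_nhds.add (tendsto_const_nhds.div (tendsto_cfVal hs) hne)
  have t2 : Tendsto (fun n => cfConv (n+1) a) atTop (nhds (cfVal a)) :=
    (tendsto_cfVal h).comp (tendsto_add_atTop_nat 1)
  have : (fun n => cfConv (n+1) a) = fun n => (a 0:ℝ) + 1 / cfConv n (fun i => a (i+1)) := by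
    funext n; rfl
  rw [this] at t2
  exact tendsto_nhds_unique t2 t1

lemma comp : ∀ (k : ℕ) (a b : ℕ → ℕ), Pos a → Pos b →
    (∀ i, i < k → a i = b i) → a k + 1 ≤ b k →
    (Even k → cfVal a ≤ cfVal b) ∧ (¬ Even k → cfVal b ≤ cfVal a)
  | 0, a, b, hpa, hpb, hagree, hlt => by
    constructor
    · intro _
      have h1 : cfVal a ≤ (a 0 : ℝ) + 1 := cfVal_upper hpa
      have h2 : (b 0 : ℝ) ≤ cfVal b := cfVal_lower hpb
      have : (a 0 : ℝ) + 1 ≤ (b 0 : ℝ) := by exact_mod_cast hlt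
      linarith
    · intro h; exact absurd Even.zero h
  | k+1, a, b, hpa, hpb, hagree, hlt => by
    have hsa : Pos (fun i => a (i+1)) := pos_shift hpa
    have hsb : Pos (fun i => b (i+1)) := pos_shift hpb
    have ih := comp k (fun i => a (i+1)) (fun i => b (i+1)) hsa hsb
      (fun i hi => hagree (i+1) (by omega)) hlt
    have h0 : a 0 = b 0 := hagree 0 (by omega)
    have ea : cfVal a = (a 0 : ℝ) + 1 / cfVal (fun i => a (i+1)) := cfVal_eq hpa
    have eb : cfVal b = (b 0 : ℝ) + 1 / cfVal (fun i => b (i+1)) := cfVal_eq hpb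
    have hA : (0:ℝ) < cfVal (fun i => a (i+1)) := lt_of_lt_of_le one_pos (one_le_cfVal hsa)
    have hB : (0:ℝ) < cfVal (fun i => b (i+1)) := lt_of_lt_of_le one_pos (one_le_cfVal hsb)
    constructor
    · intro hev
      have hk : ¬ Even k := by
        rw [Nat.even_add_one] at hev; exact hev
      have hBA : cfVal (fun i => b (i+1)) ≤ cfVal (fun i => a (i+1)) := ih.2 hk
      have : 1 / cfVal (fun i => a (i+1)) ≤ 1 / cfVal (fun i => b (i+1)) :=
        one_div_le_one_div_of_le hB hBA
      rw [ea, eb, h0]; linarith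
    · intro hodd
      have hk : Even k := by
        rw [Nat.even_add_one, not_not] at hodd; exact hodd
      have hAB : cfVal (fun i => a (i+1)) ≤ cfVal (fun i => b (i+1)) := ih.1 hk
      have : 1 / cfVal (fun i => b (i+1)) ≤ 1 / cfVal (fun i => a (i+1)) :=
        one_div_le_one_div_of_le hA hAB
      rw [ea, eb, h0]; linarith

end CFAux

lemma minTail_pos : CFAux.Pos minTail := by
  intro n; unfold minTail; split
  · rename_i h; interval_cases n <;> decide
  · split <;> omega

lemma minTail_at : ∀ m : ℕ, minTail (m+7) = if m % 2 = 0 then 1 else 2 := by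
  intro m; unfold minTail
  rw [if_neg (by omega)]
  simp [Nat.add_sub_cancel]

lemma combinatorial (a : ℕ → ℕ) (ha : ∀ n, a n = 1 ∨ a n = 2 ∨ a n = 3)
    (h13 : ¬ OccursN [1,3] a) (h31 : ¬ OccursN [3,1] a)
    (h32322 : ¬ OccursN [3,2,3,2,2] a) (h32323 : ¬ OccursN [3,2,3,2,3] a)
    (h0 : a 0 = 2) (h1 : a 1 = 3) (k : ℕ)
    (hmin : ∀ i, i < k → a i = minTail i) (hk : a k ≠ minTail k) :
    cfVal a ≤ cfVal minTail := by
  have hpa : CFAux.Pos a := fun n => by rcases ha n with h|h|h <;> omega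
  have hpm : CFAux.Pos minTail := minTail_pos
  have even_case : ∀ k', (∀ i, i < k' → a i = minTail i) → a k' + 1 ≤ minTail k' →
      Even k' → cfVal a ≤ cfVal minTail := fun k' hm hl he =>
    (CFAux.comp k' a minTail hpa hpm hm hl).1 he
  have odd_case : ∀ k', (∀ i, i < k' → a i = minTail i) → minTail k' + 1 ≤ a k' →
      ¬ Even k' → cfVal a ≤ cfVal minTail := fun k' hm hl ho =>
    (CFAux.comp k' minTail a hpm hpa (fun i hi => (hm i hi).symm) hl).2 ho
  rcases k with _|_|_|_|_|_|_|_|n <;>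
    try simp only [Nat.reduceAdd, show ∀ m:ℕ, m+1+1+1+1+1+1+1+1 = m+8 from fun m => by ring]
      at hk hmin
  · exact absurd (h0.trans (by decide)) hk
  · exact absurd (h1.trans (by decide)) hk
  · -- k = 2, minTail 2 = 3, a 2 ≤ 2
    refine even_case 2 hmin ?_ (by decide)
    have : minTail 2 = 3 := by decide
    rcases ha 2 with h|h|h <;> omega
  · -- k = 3, a 2 = 3, a 3 ≠ 1 (31), a 3 ≠ 2 → a 3 = 3
    have ha2 : a 2 = 3 := (hmin 2 (by omega)).trans (by decide)
    have ha3 : a 3 ≠ 1 := by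
      intro h3
      exact h31 ⟨2, by intro i hi; simp only [List.length] at hi; interval_cases i <;> simp [ha2, h3]⟩
    refine odd_case 3 hmin ?_ (by decide)
    have : minTail 3 = 2 := by decide
    rw [this] at hk ⊢
    rcases ha 3 with h|h|h <;> omega
  · -- k = 4, minTail 4 = 3
    refine even_case 4 hmin ?_ (by decide)
    have : minTail 4 = 3 := by decide
    rcases ha 4 with h|h|h <;> omega
  · -- k = 5, a 4 = 3, a 5 ≠ 1
    have ha4 : a 4 = 3 := (hmin 4 (by omega)).trans (by decide)
    have ha5 : a 5 ≠ 1 := by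
      intro h5
      exact h31 ⟨4, by intro i hi; simp only [List.length] at hi; interval_cases i <;> simp [ha4, h5]⟩
    refine odd_case 5 hmin ?_ (by decide)
    have : minTail 5 = 2 := by decide
    rw [this] at hk ⊢
    rcases ha 5 with h|h|h <;> omega
  · -- k = 6 : impossible
    exfalso
    have ha2 : a 2 = 3 := (hmin 2 (by omega)).trans (by decide)
    have ha3 : a 3 = 2 := (hmin 3 (by omega)).trans (by decide)
    have ha4 : a 4 = 3 := (hmin 4 (by omega)).trans (by decide)
    have ha5 : a 5 = 2 := (hmin 5 (by omega)).trans (by decide)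
    have hm6 : minTail 6 = 1 := by decide
    rcases ha 6 with h|h|h
    · exact hk (h.trans hm6.symm)
    · exact h32322 ⟨2, by intro i hi; simp only [List.length] at hi; interval_cases i <;>
        simp [ha2, ha3, ha4, ha5, h]⟩
    · exact h32323 ⟨2, by intro i hi; simp only [List.length] at hi; interval_cases i <;>
        simp [ha2, ha3, ha4, ha5, h]⟩
  · -- k = 7, minTail 7 = 1
    refine odd_case 7 hmin ?_ (by decide)
    have : minTail 7 = 1 := by decide
    rw [this] at hk ⊢
    rcases ha 7 with h|h|h <;> omega
  · -- k = n + 8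
    rcases Nat.even_or_odd n with he | ho
    · -- n even : k even, minTail k = 2, a (k-1) = 1, a k ≠ 3 (13), a k = 1
      have hm7 : minTail (n+7) = 1 := by
        rw [minTail_at n, if_pos (Nat.even_iff.mp he)]
      have hmk : minTail (n+8) = 2 := by
        have := minTail_at (n+1)
        have h1' : (n+1) % 2 = 1 := by have := Nat.even_iff.mp he; omega
        rw [show n+8 = (n+1)+7 by ring, this, h1']; norm_num
      have ha7 : a (n+7) = 1 := (hmin (n+7) (by omega)).trans hm7
      have hk3 : a (n+8) ≠ 3 := by
        intro h3
        exact h13 ⟨n+7, by intro i hi; simp only [List.length] at hi; interval_cases i <;>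
          simp [ha7, show a (n+7+1) = 3 from h3]⟩
      refine even_case (n+8) hmin ?_ ?_
      · rw [hmk] at hk ⊢
        rcases ha (n+8) with h|h|h <;> omega
      · rcases he with ⟨m, hm⟩
        exact ⟨m+4, by omega⟩
    · -- n odd : k odd, minTail k = 1
      have hmk : minTail (n+8) = 1 := by
        have := minTail_at (n+1)
        have h1' : (n+1) % 2 = 0 := by have := Nat.odd_iff.mp ho; omega
        rw [show n+8 = (n+1)+7 by ring, this, h1']; norm_num
      refine odd_case (n+8) hmin ?_ ?_
      · rw [hmk] at hk ⊢
        rcases ha (n+8) with h|h|h <;> omega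
      · intro hev
        have h2 := Nat.even_iff.mp hev
        have h3 := Nat.odd_iff.mp ho
        omega

/-- Among infinite sequences over {1,2,3} avoiding the subwords 13, 31, 32322, 32323,
any continued fraction `[0; a₁, a₂, …]` with `a₁ = 2`, `a₂ = 3` is at least
`[0; 2, 3, 3, 2, 3, 2, 1, ‾1,2]`. -/
theorem cf_min_start_two_three (a : ℕ → ℕ) (ha : ∀ n, a n = 1 ∨ a n = 2 ∨ a n = 3)
    (h13 : ¬ OccursN [1,3] a) (h31 : ¬ OccursN [3,1] a)
    (h32322 : ¬ OccursN [3,2,3,2,2] a) (h32323 : ¬ OccursN [3,2,3,2,3] a)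
    (h0 : a 0 = 2) (h1 : a 1 = 3) :
    (cfVal minTail)⁻¹ ≤ (cfVal a)⁻¹ := by
  have hpa : CFAux.Pos a := fun n => by rcases ha n with h|h|h <;> omega
  have key : cfVal a ≤ cfVal minTail := by
    by_cases hall : ∀ n, a n = minTail n
    · rw [funext hall]
    · push_neg at hall
      have hk := Nat.find_spec hall
      have hmin : ∀ i, i < Nat.find hall → a i = minTail i := fun i hi => by
        have := Nat.find_min hall hi; simpa using this
      exact combinatorial a ha h13 h31 h32322 h32323 h0 h1 _ hmin hk
  have h2a : (2:ℝ) ≤ cfVal a := by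
    have := CFAux.cfVal_lower hpa; rw [h0] at this; exact_mod_cast this
  have h2m : (0:ℝ) < cfVal a := by linarith
  exact inv_anti₀ h2m key
end

section
/- Let w = 1112122 and consider bi-infinite sequences over {1,2}. Any sequence B ∈ {1,2}^ℤ containing the block 22w11 = 22111212211 centered appropriately (B = 22w^*11) with Markov value m(B) < j_1 := m(\overline{212111112122} w^*ww121112 \overline{221211111212}) must in fact contain 22ww^*w1, i.e., the pattern w self-replicates once to the left. -/
open Filter

/-- The finite word `u` occurs as a consecutive block in the bi-infinite sequence `a`. -/
def Occurs (u : List ℕ) (a : ℤ → ℕ) : Prop :=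
  ∃ k : ℤ, ∀ i : ℕ, i < u.length → a (k + (i : ℤ)) = u.getD i 0

/-- `B` contains the block `u` placed so that the letter of `u` at index `c` sits at position `0`. -/
def CenteredBlock (u : List ℕ) (c : ℤ) (B : ℤ → ℕ) : Prop :=
  ∀ i : ℕ, i < u.length → B ((i : ℤ) - c) = u.getD i 0

/-- The bi-infinite sequence `‾ᵖ mid ‾ᵠ`: left-periodic with period `p`, the finite block
`mid` placed with its letter of index `c` at position `0`, and right-periodic with period `q`. -/
def glue (p mid q : List ℕ) (c : ℤ) : ℤ → ℕ := fun i =>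
  if i < -c then p.getD (((i + c) % (p.length : ℤ)).toNat) 0
  else if i < (mid.length : ℤ) - c then mid.getD (i + c).toNat 0
  else q.getD (((i - ((mid.length : ℤ) - c)) % (q.length : ℤ)).toNat) 0

/-- The word `w = 1112122`. -/
def w7 : List ℕ := [1,1,1,2,1,2,2]

/-- Forbidden words for `w = 1112122`: each forces Markov value at least `j₁`. -/
def Forb7 : List (List ℕ) :=
  [[1,1,2,2,1,1,1,2,1,2,2,1,1],
   [2,1,1,1,2,1,2,2,1,1,1,1],
   [2,1,1,1,2,1,2,2,1,1,1,2,2],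
   [2,2,1,2,2,1,1,1,2,1,2,2,1,1],
   [1,1,2,1,2,2,1,1,1,2,1,2,2,1,1,1,2,1,1],
   [2,1,1,2,1,2,2,1,1,1,2,1,2,2,1,1],
   [1,1,1,1,2,1,2,2,1,1,1,2,1,2,2,1,1,1,2,1,2,2],
   [2,1,1,1,2,1,2,2,2],
   [2,2,2,1,1,1,2,1,2,2,1,1],
   [2,1,1,1,2,1,2,2,1,1,2],
   [1,2,1,1,1,2,1,2],
   [2,1,1,1,2,1,2,1],
   [2,1,2,1,2]]

/-- `j₁ = m(‾212111112122 w∗ww121112 ‾221211111212)`, the self-replication height. -/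
noncomputable def j1w7 : ℝ := markov (glue [2,1,2,1,1,1,1,1,2,1,2,2] [1,1,1,2,1,2,2,1,1,1,2,1,2,2,1,1,1,2,1,2,2,1,2,1,1,1,2] [2,2,1,2,1,1,1,1,1,2,1,2] 3)

/-- Self-replication for `w = 1112122`: if `B ∈ {1,2}^ℤ` has central block `22w∗11`
and `m(B) < j₁`, then in fact `B` has central block `22ww∗w1`. -/
theorem self_replication_1112122 (B : ℤ → ℕ) (hB : ∀ n, B n = 1 ∨ B n = 2)
    (hF : ∀ u ∈ Forb7, ∀ C : ℤ → ℕ, (∀ n, C n = 1 ∨ C n = 2) → Occurs u C →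
      j1w7 ≤ markov C)
    (hc : CenteredBlock [2,2,1,1,1,2,1,2,2,1,1] 5 B)
    (hm : markov B < j1w7) :
    CenteredBlock [2,2,1,1,1,2,1,2,2,1,1,1,2,1,2,2,1,1,1,2,1,2,2,1] 12 B := by
  have noOcc : ∀ u ∈ Forb7, ¬ Occurs u B := fun u hu ho =>
    absurd (hF u hu B hB ho) (not_le.mpr hm)
  have em5 : B (-5) = 2 := by
    have h := hc 0 (by norm_num); push_cast at h; norm_num at h; exact h
  have em4 : B (-4) = 2 := by
    have h := hc 1 (by norm_num); push_cast at h; norm_num at h; exact h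
  have em3 : B (-3) = 1 := by
    have h := hc 2 (by norm_num); push_cast at h; norm_num at h; exact h
  have em2 : B (-2) = 1 := by
    have h := hc 3 (by norm_num); push_cast at h; norm_num at h; exact h
  have em1 : B (-1) = 1 := by
    have h := hc 4 (by norm_num); push_cast at h; norm_num at h; exact h
  have e0 : B (0) = 2 := by
    have h := hc 5 (by norm_num); push_cast at h; norm_num at h; exact h
  have e1 : B (1) = 1 := by
    have h := hc 6 (by norm_num); push_cast at h; norm_num at h; exact h
  have e2 : B (2) = 2 := by
    have h := hc 7 (by norm_num); push_cast at h; norm_num at h; exact h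
  have e3 : B (3) = 2 := by
    have h := hc 8 (by norm_num); push_cast at h; norm_num at h; exact h
  have e4 : B (4) = 1 := by
    have h := hc 9 (by norm_num); push_cast at h; norm_num at h; exact h
  have e5 : B (5) = 1 := by
    have h := hc 10 (by norm_num); push_cast at h; norm_num at h; exact h
  have em6 : B (-6) = 1 := by
    rcases hB (-6) with h | h
    · exact h
    · exfalso
      refine noOcc [2,2,2,1,1,1,2,1,2,2,1,1] (by decide) ⟨-6, fun i hi => ?_⟩
      norm_num at hi; interval_cases i <;> push_cast <;> norm_num <;> assumption
  have e6 : B (6) = 1 := by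
    rcases hB (6) with h | h
    · exact h
    · exfalso
      refine noOcc [2,1,1,1,2,1,2,2,1,1,2] (by decide) ⟨-4, fun i hi => ?_⟩
      norm_num at hi; interval_cases i <;> push_cast <;> norm_num <;> assumption
  have em7 : B (-7) = 2 := by
    rcases hB (-7) with h | h
    · exfalso
      refine noOcc [1,1,2,2,1,1,1,2,1,2,2,1,1] (by decide) ⟨-7, fun i hi => ?_⟩
      norm_num at hi; interval_cases i <;> push_cast <;> norm_num <;> assumption
    · exact h
  have e7 : B (7) = 2 := by
    rcases hB (7) with h | h
    · exfalso
      refine noOcc [2,1,1,1,2,1,2,2,1,1,1,1] (by decide) ⟨-4, fun i hi => ?_⟩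
      norm_num at hi; interval_cases i <;> push_cast <;> norm_num <;> assumption
    · exact h
  have em8 : B (-8) = 1 := by
    rcases hB (-8) with h | h
    · exact h
    · exfalso
      refine noOcc [2,2,1,2,2,1,1,1,2,1,2,2,1,1] (by decide) ⟨-8, fun i hi => ?_⟩
      norm_num at hi; interval_cases i <;> push_cast <;> norm_num <;> assumption
  have e8 : B (8) = 1 := by
    rcases hB (8) with h | h
    · exact h
    · exfalso
      refine noOcc [2,1,1,1,2,1,2,2,1,1,1,2,2] (by decide) ⟨-4, fun i hi => ?_⟩
      norm_num at hi; interval_cases i <;> push_cast <;> norm_num <;> assumption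
  have em9 : B (-9) = 1 := by
    rcases hB (-9) with h | h
    · exact h
    · exfalso
      refine noOcc [2,1,2,1,2] (by decide) ⟨-9, fun i hi => ?_⟩
      norm_num at hi; interval_cases i <;> push_cast <;> norm_num <;> assumption
  have e9 : B (9) = 2 := by
    rcases hB (9) with h | h
    · exfalso
      refine noOcc [1,1,2,1,2,2,1,1,1,2,1,2,2,1,1,1,2,1,1] (by decide) ⟨-9, fun i hi => ?_⟩
      norm_num at hi; interval_cases i <;> push_cast <;> norm_num <;> assumption
    · exact h
  have em10 : B (-10) = 1 := by
    rcases hB (-10) with h | h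
    · exact h
    · exfalso
      refine noOcc [2,1,1,2,1,2,2,1,1,1,2,1,2,2,1,1] (by decide) ⟨-10, fun i hi => ?_⟩
      norm_num at hi; interval_cases i <;> push_cast <;> norm_num <;> assumption
  have e10 : B (10) = 2 := by
    rcases hB (10) with h | h
    · exfalso
      refine noOcc [2,1,1,1,2,1,2,1] (by decide) ⟨3, fun i hi => ?_⟩
      norm_num at hi; interval_cases i <;> push_cast <;> norm_num <;> assumption
    · exact h
  have em11 : B (-11) = 2 := by
    rcases hB (-11) with h | h
    · exfalso
      refine noOcc [1,1,1,1,2,1,2,2,1,1,1,2,1,2,2,1,1,1,2,1,2,2] (by decide) ⟨-11, fun i hi => ?_⟩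
      norm_num at hi; interval_cases i <;> push_cast <;> norm_num <;> assumption
    · exact h
  have e11 : B (11) = 1 := by
    rcases hB (11) with h | h
    · exact h
    · exfalso
      refine noOcc [2,1,1,1,2,1,2,2,2] (by decide) ⟨3, fun i hi => ?_⟩
      norm_num at hi; interval_cases i <;> push_cast <;> norm_num <;> assumption
  have em12 : B (-12) = 2 := by
    rcases hB (-12) with h | h
    · exfalso
      refine noOcc [1,2,1,1,1,2,1,2] (by decide) ⟨-12, fun i hi => ?_⟩
      norm_num at hi; interval_cases i <;> push_cast <;> norm_num <;> assumption
    · exact h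
  intro i hi
  norm_num at hi; interval_cases i <;> push_cast <;> norm_num <;> assumption
end

section
/- The four periodic orbits with minimal periods u = 112211222211221111122221122111221111122, u^T, v = 112222112211221111122221122111112211122, v^T (all of length 39 over {1,2}) are pairwise distinct as shift-orbits, each of u and v is non-semisymmetric, and the words satisfy the factorization identities u = w_l·1122·w_c·2211·w_r and v = w_l·2211·w_c·1122·w_r where w_l = 1122, w_c = 2211221111122221122111, w_r = 11122. -/
/-- The transpose of a bi-infinite sequence. -/
def transposeSeq (a : ℤ → ℕ) : ℤ → ℕ := fun n => a (-n)

/-- The orbit of `a` under the shift map. -/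
def shiftOrbit (a : ℤ → ℕ) : Set (ℤ → ℕ) := {b | ∃ k : ℤ, b = fun n => a (n + k)}

/-- A bi-infinite sequence is semisymmetric if its shift-orbit coincides with that of
its transpose. -/
def SeqSemisymmetric (a : ℤ → ℕ) : Prop := shiftOrbit a = shiftOrbit (transposeSeq a)

def uWord : List ℕ := [1,1,2,2,1,1,2,2,2,2,1,1,2,2,1,1,1,1,1,2,2,2,2,1,1,2,2,1,1,1,2,2,1,1,1,1,1,2,2]
def vWord : List ℕ := [1,1,2,2,2,2,1,1,2,2,1,1,2,2,1,1,1,1,1,2,2,2,2,1,1,2,2,1,1,1,1,1,2,2,1,1,1,2,2]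

lemma orbit_ne (w1 w2 : List ℕ) (h1 : w1.length = 39) (h2 : w2.length = 39)
    (h : ∀ r < 39, ∃ i < 39, w2.getD i 0 ≠ w1.getD ((i + r) % 39) 0) :
    shiftOrbit (periodize w1) ≠ shiftOrbit (periodize w2) := by
  intro he
  have hb : periodize w2 ∈ shiftOrbit (periodize w1) := by
    rw [he]; exact ⟨0, by funext n; simp⟩
  obtain ⟨k, hk⟩ := hb
  have hrnn : 0 ≤ k % 39 := Int.emod_nonneg k (by norm_num)
  have hrlt' : k % 39 < 39 := Int.emod_lt_of_pos k (by norm_num)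
  set r := (k % 39).toNat with hrdef
  have hrlt : r < 39 := by omega
  obtain ⟨i, hi, hne⟩ := h r hrlt
  apply hne
  have hthis := congrFun hk (i : ℤ)
  simp only [periodize, h1, h2, Nat.cast_ofNat] at hthis
  have e1 : (((i : ℤ)) % 39).toNat = i := by omega
  have e2 : ((((i : ℤ)) + k) % 39).toNat = (i + r) % 39 := by omega
  rw [e1, e2] at hthis
  exact hthis

lemma not_semi (w : List ℕ)
    (h : ∀ k ≤ w.length, ¬((w.take k).reverse = w.take k ∧ (w.drop k).reverse = w.drop k)) :
    ¬ Semisymmetric w := by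
  rintro (hp | ⟨p, q, hw, hp, hq⟩)
  · exact h w.length le_rfl (by simpa [IsPalindrome] using hp)
  · subst hw
    exact h p.length (by simp) (by
      simpa [IsPalindrome, List.take_left, List.drop_left] using And.intro hp hq)

/-- The four periodic orbits of `u`, `uᵀ`, `v`, `vᵀ` are pairwise distinct shift-orbits,
`u` and `v` are non-semisymmetric, and `u`, `v` admit the stated factorizations. -/
theorem four_orbits_distinct :
    [periodize uWord, periodize uWord.reverse, periodize vWord,
      periodize vWord.reverse].Pairwise (fun a b => shiftOrbit a ≠ shiftOrbit b) ∧
    ¬ Semisymmetric uWord ∧ ¬ Semisymmetric vWord ∧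
    uWord = [1,1,2,2] ++ [1,1,2,2] ++ [2,2,1,1,2,2,1,1,1,1,1,2,2,2,2,1,1,2,2,1,1,1] ++ [2,2,1,1] ++ [1,1,1,2,2] ∧
    vWord = [1,1,2,2] ++ [2,2,1,1] ++ [2,2,1,1,2,2,1,1,1,1,1,2,2,2,2,1,1,2,2,1,1,1] ++ [1,1,2,2] ++ [1,1,1,2,2] := by
  refine ⟨?_, not_semi _ (by decide), not_semi _ (by decide), by decide, by decide⟩
  simp only [List.pairwise_cons, List.mem_cons, List.mem_singleton, List.not_mem_nil, forall_eq_or_imp, forall_eq]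
  repeat' apply And.intro
  all_goals
    first
    | exact orbit_ne _ _ (by decide) (by decide) (by decide)
    | (intro _ h; exact h.elim)
    | exact List.Pairwise.nil
end
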